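/- arXiv:1712.04746 — 2 statements merged into one kernel-verified Lean document; each statement's English description precedes it below -/
import Mathlib

section
/- If A and B are Lie algebras over a field F, then the Schur multiplier of their direct sum satisfies M(A ⊕ B) ≅ M(A) ⊕ M(B) ⊕ (A^{ab} ⊗ B^{ab}), where A^{ab} = A/[A,A]. -/
open LieAlgebra Matrix Module


open LieAlgebra

section ProdLie
variable {L M : Type*}

instance prodLieRing [LieRing L] [LieRing M] : LieRing (L × M) where
  bracket x y := (⁅x.1, y.1⁆, ⁅x.2, y.2⁆)
  add_lie x y z := by ext <;> simp [add_lie]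
  lie_add x y z := by ext <;> simp [lie_add]
  lie_self x := by ext <;> simp
  leibniz_lie x y z := by ext <;> simp

@[simp] theorem prod_bracket_fst [LieRing L] [LieRing M] (x y : L × M) :
    ⁅x, y⁆.1 = ⁅x.1, y.1⁆ := rfl
@[simp] theorem prod_bracket_snd [LieRing L] [LieRing M] (x y : L × M) :
    ⁅x, y⁆.2 = ⁅x.2, y.2⁆ := rfl

instance prodLieAlgebra (F : Type*) [CommRing F] [LieRing L] [LieRing M]
    [LieAlgebra F L] [LieAlgebra F M] : LieAlgebra F (L × M) where
  lie_smul t x y := by ext <;> simp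
end ProdLie

section AbL
variable (F : Type*) [Field F]

/-- The abelian Lie algebra of dimension `k` over `F`. -/
def AbLie (k : ℕ) : Type _ := Fin k → F

instance (k : ℕ) : AddCommGroup (AbLie F k) := Pi.addCommGroup
instance (k : ℕ) : Module F (AbLie F k) := Pi.module _ _ _

instance (k : ℕ) : LieRing (AbLie F k) where
  bracket _ _ := 0
  add_lie _ _ _ := (zero_add 0).symm
  lie_add _ _ _ := (zero_add 0).symm
  lie_self _ := rfl
  leibniz_lie _ _ _ := (zero_add 0).symm

instance (k : ℕ) : LieAlgebra F (AbLie F k) where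
  lie_smul t x y := (smul_zero t).symm

instance (k : ℕ) : FiniteDimensional F (AbLie F k) :=
  (inferInstance : FiniteDimensional F (Fin k → F))

instance (k : ℕ) : IsLieAbelian (AbLie F k) := ⟨fun _ _ => rfl⟩
end AbL
open Matrix
section Heis
variable (F : Type*) [Field F]

/-- The Heisenberg Lie algebra `H(m)` of dimension `2m+1`. -/
def Heis (m : ℕ) : Type _ := (Fin m → F) × (Fin m → F) × F

instance (m : ℕ) : AddCommGroup (Heis F m) := Prod.instAddCommGroup
instance (m : ℕ) : Module F (Heis F m) := Prod.instModule

instance (m : ℕ) : LieRing (Heis F m) where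
  bracket x y := (0, 0, x.1 ⬝ᵥ y.2.1 - y.1 ⬝ᵥ x.2.1)
  add_lie x y z := by
    refine Prod.ext ?_ (Prod.ext ?_ ?_)
    · show (0 : Fin m → F) = 0 + 0; rw [add_zero]
    · show (0 : Fin m → F) = 0 + 0; rw [add_zero]
    · show (x.1 + y.1) ⬝ᵥ z.2.1 - z.1 ⬝ᵥ (x.2.1 + y.2.1) =
        (x.1 ⬝ᵥ z.2.1 - z.1 ⬝ᵥ x.2.1) + (y.1 ⬝ᵥ z.2.1 - z.1 ⬝ᵥ y.2.1)
      rw [add_dotProduct, dotProduct_add]; ring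
  lie_add x y z := by
    refine Prod.ext ?_ (Prod.ext ?_ ?_)
    · show (0 : Fin m → F) = 0 + 0; rw [add_zero]
    · show (0 : Fin m → F) = 0 + 0; rw [add_zero]
    · show x.1 ⬝ᵥ (y.2.1 + z.2.1) - (y.1 + z.1) ⬝ᵥ x.2.1 =
        (x.1 ⬝ᵥ y.2.1 - y.1 ⬝ᵥ x.2.1) + (x.1 ⬝ᵥ z.2.1 - z.1 ⬝ᵥ x.2.1)
      rw [add_dotProduct, dotProduct_add]; ring
  lie_self x := by
    refine Prod.ext rfl (Prod.ext rfl ?_)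
    show x.1 ⬝ᵥ x.2.1 - x.1 ⬝ᵥ x.2.1 = 0
    ring
  leibniz_lie x y z := by
    refine Prod.ext ?_ (Prod.ext ?_ ?_)
    · show (0 : Fin m → F) = 0 + 0; rw [add_zero]
    · show (0 : Fin m → F) = 0 + 0; rw [add_zero]
    · show x.1 ⬝ᵥ (0 : Fin m → F) - (0 : Fin m → F) ⬝ᵥ x.2.1 =
        ((0 : Fin m → F) ⬝ᵥ z.2.1 - z.1 ⬝ᵥ (0 : Fin m → F)) +
          (y.1 ⬝ᵥ (0 : Fin m → F) - (0 : Fin m → F) ⬝ᵥ y.2.1)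
      simp

instance (m : ℕ) : LieAlgebra F (Heis F m) where
  lie_smul t x y := by
    refine Prod.ext ?_ (Prod.ext ?_ ?_)
    · show (0 : Fin m → F) = t • 0; rw [smul_zero]
    · show (0 : Fin m → F) = t • 0; rw [smul_zero]
    · show x.1 ⬝ᵥ (t • y.2.1) - (t • y.1) ⬝ᵥ x.2.1 = t • (x.1 ⬝ᵥ y.2.1 - y.1 ⬝ᵥ x.2.1)
      rw [dotProduct_smul, smul_dotProduct, smul_sub]

instance (m : ℕ) : FiniteDimensional F (Heis F m) :=
  (inferInstance : FiniteDimensional F ((Fin m → F) × (Fin m → F) × F))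
end Heis
open LieAlgebra

universe u v

section Functors
variable (F : Type u) [Field F] (L : Type v) [LieRing L] [LieAlgebra F L]

/-- The canonical free presentation `FreeLieAlgebra F L → L`. -/
noncomputable def presHom : FreeLieAlgebra F L →ₗ⁅F⁆ L := FreeLieAlgebra.lift F id

/-- The relation ideal `R` of the canonical free presentation. -/
noncomputable def presKer : LieIdeal F (FreeLieAlgebra F L) := (presHom F L).ker

/-- The Schur multiplier `M(L) = (R ∩ F²)/[R,F]` of a Lie algebra. -/
noncomputable abbrev Multiplier : Type (max u v) :=
  ↥((presKer F L ⊓ derivedSeries F (FreeLieAlgebra F L) 1).toSubmodule) ⧸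
    (Submodule.comap
      ((presKer F L ⊓ derivedSeries F (FreeLieAlgebra F L) 1).toSubmodule).subtype
      (⁅presKer F L, (⊤ : LieIdeal F (FreeLieAlgebra F L))⁆ : LieIdeal F (FreeLieAlgebra F L)).toSubmodule)


/-- Relations defining the nonabelian tensor square. -/
def tensorRel : Set (FreeLieAlgebra F (L × L)) :=
  letI e : L × L → FreeLieAlgebra F (L × L) := FreeLieAlgebra.of F
  { x | (∃ (c : F) (a b : L), x = e (c • a, b) - c • e (a, b)) ∨
        (∃ (c : F) (a b : L), x = e (a, c • b) - c • e (a, b)) ∨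
        (∃ a a' b : L, x = e (a + a', b) - e (a, b) - e (a', b)) ∨
        (∃ a b b' : L, x = e (a, b + b') - e (a, b) - e (a, b')) ∨
        (∃ a a' b : L, x = e (⁅a, a'⁆, b) - e (a, ⁅a', b⁆) + e (a', ⁅a, b⁆)) ∨
        (∃ a b b' : L, x = e (a, ⁅b, b'⁆) - e (⁅b', a⁆, b) + e (⁅b, a⁆, b')) ∨
        (∃ a b a' b' : L, x = ⁅e (a, b), e (a', b')⁆ + e (⁅b, a⁆, ⁅a', b'⁆)) }

/-- The nonabelian tensor square `L ⊗ L`. -/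
abbrev NTensor : Type (max u v) :=
  FreeLieAlgebra F (L × L) ⧸ LieSubmodule.lieSpan F (FreeLieAlgebra F (L × L)) (tensorRel F L)


/-- The generator `a ⊗ b` of the nonabelian tensor square. -/
noncomputable def tmk (a b : L) : NTensor F L :=
  LieSubmodule.Quotient.mk (N := LieSubmodule.lieSpan F (FreeLieAlgebra F (L × L)) (tensorRel F L))
    (FreeLieAlgebra.of F (a, b))

/-- The square `L □ L`, i.e. the subalgebra of `L ⊗ L` generated by the elements `a ⊗ a`. -/
noncomputable def SqSub : LieSubalgebra F (NTensor F L) :=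
  LieSubalgebra.lieSpan F _ { x | ∃ a : L, x = tmk F L a a }

/-- The ideal of `L ⊗ L` generated by the elements `a ⊗ a`. -/
noncomputable def sqIdeal : LieIdeal F (NTensor F L) :=
  LieSubmodule.lieSpan F _ { x | ∃ a : L, x = tmk F L a a }

/-- The exterior square `L ∧ L`. -/
noncomputable abbrev ExtSq : Type (max u v) := NTensor F L ⧸ sqIdeal F L


/-- The generator `a ∧ b` of the exterior square. -/
noncomputable def wmk (a b : L) : ExtSq F L :=
  LieSubmodule.Quotient.mk (N := sqIdeal F L) (tmk F L a b)

/-- The exterior center `Z^∧(L)`. -/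
noncomputable def extCenter : Set L := { x : L | ∀ l : L, wmk F L x l = 0 }

/-- A Lie algebra is capable if it is isomorphic to `H/Z(H)` for some Lie algebra `H`. -/
def Capable : Prop :=
  ∃ (H : Type (max u v)) (_ : LieRing H) (_ : LieAlgebra F H),
    Nonempty ((H ⧸ LieAlgebra.center F H) ≃ₗ⁅F⁆ L)

/-- The corank `t(L)` of an `n`-dimensional nilpotent Lie algebra. -/
noncomputable def corank : ℕ :=
  Module.finrank F L * (Module.finrank F L - 1) / 2 - Module.finrank F (Multiplier F L)

/-- The abelianization of `L` (as an `F`-module). -/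
noncomputable abbrev AbQuot : Type v := L ⧸ derivedSeries F L 1

end Functors

/-! By Hopf's formula the multiplier `(R ∩ F²) / [R, F]` does not depend on the free
presentation `F / R`, so present `A × B` by the free Lie algebra on `A ⊕ B`. Modulo any ideal
containing the cross brackets `⁅a, b⁆` (which lie in `R`), an element of `F` is the sum of its
images in the free algebras on `A` and on `B`; hence `M(A) × M(B) × (A^ab ⊗ B^ab)` maps onto
`M(A × B)`, with `a ⊗ b ↦ ⁅a, b⁆`. A left inverse is given by the projections to `M(A)` and
`M(B)` and, for the tensor factor, by lifting to the central extension of `A × B` by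
`A^ab ⊗ B^ab` in which `⁅a, b⁆ = ā ⊗ b̄`. -/

section LieIdealLemmas

variable {R L L' M M' : Type*} [CommRing R] [LieRing L] [LieAlgebra R L] [LieRing L']
  [LieAlgebra R L'] [LieRing M] [LieAlgebra R M] [LieRing M'] [LieAlgebra R M']

theorem derivedSeries_one_toSubmodule_le {P : Submodule R L} (h : ∀ x y : L, ⁅x, y⁆ ∈ P) :
    (derivedSeries R L 1).toSubmodule ≤ P := by
  rw [derivedSeries_def, derivedSeriesOfIdeal_succ, derivedSeriesOfIdeal_zero,
    LieSubmodule.lieIdeal_oper_eq_linear_span', Submodule.span_le]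
  rintro _ ⟨x, -, y, -, rfl⟩
  exact h x y

theorem lie_mem_derivedSeries_one (x y : L) : ⁅x, y⁆ ∈ derivedSeries R L 1 := by
  rw [derivedSeries_def, derivedSeriesOfIdeal_succ, derivedSeriesOfIdeal_zero]
  exact LieSubmodule.lie_mem_lie (LieSubmodule.mem_top x) (LieSubmodule.mem_top y)

theorem lie_top_le_derivedSeries_one (I : LieIdeal R L) :
    ⁅I, (⊤ : LieIdeal R L)⁆ ≤ derivedSeries R L 1 := by
  rw [derivedSeries_def, derivedSeriesOfIdeal_succ, derivedSeriesOfIdeal_zero]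
  exact LieSubmodule.mono_lie le_top le_top

theorem lie_mem_lie_top_of_mem_left {I : LieIdeal R L} {x : L} (hx : x ∈ I) (y : L) :
    ⁅x, y⁆ ∈ ⁅I, (⊤ : LieIdeal R L)⁆ :=
  LieSubmodule.lie_mem_lie hx (LieSubmodule.mem_top y)

theorem lie_mem_lie_top_of_mem_right {I : LieIdeal R L} {x : L} (hx : x ∈ I) (y : L) :
    ⁅y, x⁆ ∈ ⁅I, (⊤ : LieIdeal R L)⁆ := by
  rw [← lie_skew]
  exact neg_mem (lie_mem_lie_top_of_mem_left hx y)

theorem lie_mem_lie_top_of_sub_lie_mem {I : LieIdeal R L} {x x₁ x₂ : L} (hx : x - ⁅x₁, x₂⁆ ∈ I)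
    {y : L} (h₁ : ⁅x₁, y⁆ ∈ I) (h₂ : ⁅x₂, y⁆ ∈ I) : ⁅x, y⁆ ∈ ⁅I, (⊤ : LieIdeal R L)⁆ := by
  have hsplit : ⁅x, y⁆ = ⁅x - ⁅x₁, x₂⁆, y⁆ + (⁅x₁, ⁅x₂, y⁆⁆ - ⁅x₂, ⁅x₁, y⁆⁆) := by
    rw [sub_lie, lie_lie]
    abel
  rw [hsplit]
  exact add_mem (lie_mem_lie_top_of_mem_left hx y)
    (sub_mem (lie_mem_lie_top_of_mem_right h₂ x₁) (lie_mem_lie_top_of_mem_right h₁ x₂))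

theorem sub_mem_lie_top_of_forall_sub_mem {J : LieIdeal R L'} {f g : L →ₗ⁅R⁆ L'}
    (h : ∀ x, f x - g x ∈ J) {z : L} (hz : z ∈ derivedSeries R L 1) :
    f z - g z ∈ ⁅J, (⊤ : LieIdeal R L')⁆ := by
  refine derivedSeries_one_toSubmodule_le (P := (⁅J, (⊤ : LieIdeal R L')⁆ :
    LieIdeal R L').toSubmodule.comap ((f : L →ₗ[R] L') - (g : L →ₗ[R] L'))) (fun x y => ?_) hz
  have hsplit : f ⁅x, y⁆ - g ⁅x, y⁆ = ⁅f x - g x, f y⁆ + ⁅g x, f y - g y⁆ := by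
    simp only [LieHom.map_lie, sub_lie, lie_sub]
    abel
  simpa [hsplit] using add_mem (lie_mem_lie_top_of_mem_left (h x) (f y))
    (lie_mem_lie_top_of_mem_right (h y) (g x))

theorem mem_inf_derivedSeries_of_mem_lie_top {I : LieIdeal R L} {x : L}
    (hx : x ∈ ⁅I, (⊤ : LieIdeal R L)⁆) : x ∈ I ⊓ derivedSeries R L 1 :=
  (LieSubmodule.mem_inf _ _ _).2
    ⟨LieSubmodule.lie_le_left I ⊤ hx, lie_top_le_derivedSeries_one I hx⟩

theorem LieHom.map_mem_inf_derivedSeries (f : L →ₗ⁅R⁆ L') {I : LieIdeal R L}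
    {J : LieIdeal R L'} (hf : ∀ x ∈ I, f x ∈ J) {x : L} (hx : x ∈ I ⊓ derivedSeries R L 1) :
    f x ∈ J ⊓ derivedSeries R L' 1 :=
  (LieSubmodule.mem_inf _ _ _).2 ⟨hf x ((LieSubmodule.mem_inf _ _ _).1 hx).1,
    LieIdeal.derivedSeries_map_le 1 (LieIdeal.mem_map ((LieSubmodule.mem_inf _ _ _).1 hx).2)⟩

theorem LieHom.map_mem_lie_top (f : L →ₗ⁅R⁆ L') {I : LieIdeal R L} {J : LieIdeal R L'}
    (hf : ∀ x ∈ I, f x ∈ J) {x : L} (hx : x ∈ ⁅I, (⊤ : LieIdeal R L)⁆) :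
    f x ∈ ⁅J, (⊤ : LieIdeal R L')⁆ :=
  (LieIdeal.map_bracket_le f).trans
    (LieSubmodule.mono_lie (LieIdeal.map_le_iff_le_comap.2 hf) le_top) (LieIdeal.mem_map hx)

def LieIdeal.centralizerMod (J : LieIdeal R L) (w : L) : LieSubalgebra R L where
  carrier := {u | ⁅u, w⁆ ∈ J}
  zero_mem' := by simp
  add_mem' hu hv := by simpa [add_lie] using add_mem hu hv
  smul_mem' c u hu := by simpa [smul_lie] using J.smul_mem c hu
  lie_mem' {u v} hu hv := by
    show ⁅⁅u, v⁆, w⁆ ∈ J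
    rw [lie_lie]
    exact sub_mem (J.lie_mem hv) (J.lie_mem hu)

@[simp]
theorem LieIdeal.mem_centralizerMod {J : LieIdeal R L} {w u : L} :
    u ∈ J.centralizerMod w ↔ ⁅u, w⁆ ∈ J :=
  Iff.rfl

theorem LieHom.map_mem_ker_of_comp_eq {π : L →ₗ⁅R⁆ M} {π' : L' →ₗ⁅R⁆ M'} {f : L →ₗ⁅R⁆ L'}
    {g : M →ₗ⁅R⁆ M'} (h : π'.comp f = g.comp π) (x : L) (hx : x ∈ π.ker) : f x ∈ π'.ker := by
  rw [LieHom.mem_ker] at hx ⊢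
  rw [← LieHom.comp_apply, h, LieHom.comp_apply, hx, map_zero]

end LieIdealLemmas

namespace FreeLieAlgebra

section Generators

variable {R L M X : Type*} [CommRing R] [LieRing L] [LieAlgebra R L] [LieRing M]
  [LieAlgebra R M]

theorem mem_of_forall_of_mem (S : LieSubalgebra R (FreeLieAlgebra R X)) (h : ∀ x, of R x ∈ S)
    (z : FreeLieAlgebra R X) : z ∈ S := by
  let φ : FreeLieAlgebra R X →ₗ⁅R⁆ S := lift R fun x => ⟨of R x, h x⟩
  have hφ : (φ z : FreeLieAlgebra R X) = z :=
    LieHom.congr_fun (show S.incl.comp φ = LieHom.id from hom_ext fun x => by simp [φ]) z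
  exact hφ ▸ (φ z).2

theorem exists_comp_eq {π : L →ₗ⁅R⁆ M} (hπ : Function.Surjective π)
    (f : FreeLieAlgebra R X →ₗ⁅R⁆ M) : ∃ α : FreeLieAlgebra R X →ₗ⁅R⁆ L, π.comp α = f := by
  choose s hs using hπ
  exact ⟨lift R (s ∘ f ∘ of R), hom_ext fun x => by simp [hs]⟩

end Generators

section Sum

variable (R : Type*) [CommRing R] {X Y : Type*}

noncomputable def sumInl : FreeLieAlgebra R X →ₗ⁅R⁆ FreeLieAlgebra R (X ⊕ Y) :=
  lift R (of R ∘ Sum.inl)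

noncomputable def sumInr : FreeLieAlgebra R Y →ₗ⁅R⁆ FreeLieAlgebra R (X ⊕ Y) :=
  lift R (of R ∘ Sum.inr)

noncomputable def sumFst : FreeLieAlgebra R (X ⊕ Y) →ₗ⁅R⁆ FreeLieAlgebra R X :=
  lift R (Sum.elim (of R) 0)

noncomputable def sumSnd : FreeLieAlgebra R (X ⊕ Y) →ₗ⁅R⁆ FreeLieAlgebra R Y :=
  lift R (Sum.elim 0 (of R))

variable {R}

@[simp] theorem sumInl_of (x : X) : sumInl R (Y := Y) (of R x) = of R (Sum.inl x) := by
  simp [sumInl]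

@[simp] theorem sumInr_of (y : Y) : sumInr R (X := X) (of R y) = of R (Sum.inr y) := by
  simp [sumInr]

@[simp] theorem sumFst_of_inl (x : X) : sumFst R (Y := Y) (of R (Sum.inl x)) = of R x := by
  simp [sumFst]

@[simp] theorem sumFst_of_inr (y : Y) : sumFst R (of R (Sum.inr y : X ⊕ Y)) = 0 := by
  simp [sumFst]

@[simp] theorem sumSnd_of_inl (x : X) : sumSnd R (of R (Sum.inl x : X ⊕ Y)) = 0 := by
  simp [sumSnd]

@[simp] theorem sumSnd_of_inr (y : Y) : sumSnd R (X := X) (of R (Sum.inr y)) = of R y := by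
  simp [sumSnd]

@[simp] theorem sumFst_sumInl (u : FreeLieAlgebra R X) : sumFst R (sumInl R (Y := Y) u) = u :=
  LieHom.congr_fun (show (sumFst R).comp (sumInl R) = LieHom.id from hom_ext fun _ => by simp) u

@[simp] theorem sumSnd_sumInr (v : FreeLieAlgebra R Y) : sumSnd R (sumInr R (X := X) v) = v :=
  LieHom.congr_fun (show (sumSnd R).comp (sumInr R) = LieHom.id from hom_ext fun _ => by simp) v

@[simp] theorem sumFst_sumInr (v : FreeLieAlgebra R Y) : sumFst R (sumInr R (X := X) v) = 0 :=
  LieHom.congr_fun (show (sumFst R).comp (sumInr R) = 0 from hom_ext fun _ => by simp) v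

@[simp] theorem sumSnd_sumInl (u : FreeLieAlgebra R X) : sumSnd R (sumInl R (Y := Y) u) = 0 :=
  LieHom.congr_fun (show (sumSnd R).comp (sumInl R) = 0 from hom_ext fun _ => by simp) u

variable {J : LieIdeal R (FreeLieAlgebra R (X ⊕ Y))}

theorem lie_sumInl_sumInr_mem (hJ : ∀ x y, ⁅of R (Sum.inl x : X ⊕ Y), of R (Sum.inr y)⁆ ∈ J)
    (u : FreeLieAlgebra R X) (v : FreeLieAlgebra R Y) : ⁅sumInl R (Y := Y) u, sumInr R v⁆ ∈ J := by
  have hgen (y : Y) : ⁅sumInl R u, of R (Sum.inr y)⁆ ∈ J :=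
    mem_of_forall_of_mem ((J.centralizerMod (of R (Sum.inr y))).comap (sumInl R))
      (fun x => by simpa using hJ x y) u
  rw [← neg_mem_iff, lie_skew]
  refine mem_of_forall_of_mem ((J.centralizerMod (sumInl R u)).comap (sumInr R)) (fun y => ?_) v
  rw [LieSubalgebra.mem_comap, LieIdeal.mem_centralizerMod, sumInr_of, ← neg_mem_iff, lie_skew]
  exact hgen y

theorem sub_sumInl_sub_sumInr_mem (hJ : ∀ x y, ⁅of R (Sum.inl x : X ⊕ Y), of R (Sum.inr y)⁆ ∈ J)
    (z : FreeLieAlgebra R (X ⊕ Y)) : z - sumInl R (sumFst R z) - sumInr R (sumSnd R z) ∈ J := by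
  let ε : FreeLieAlgebra R (X ⊕ Y) →ₗ[R] FreeLieAlgebra R (X ⊕ Y) :=
    LinearMap.id - ((sumInl R).comp (sumFst R) : _ →ₗ⁅R⁆ _).toLinearMap -
      ((sumInr R).comp (sumSnd R) : _ →ₗ⁅R⁆ _).toLinearMap
  have hε (z) : ε z = z - sumInl R (sumFst R z) - sumInr R (sumSnd R z) := rfl
  let S : LieSubalgebra R (FreeLieAlgebra R (X ⊕ Y)) :=
    { J.toSubmodule.comap ε with
      lie_mem' := fun {x y} hx hy => by
        change ε x ∈ J at hx
        change ε y ∈ J at hy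
        change ε ⁅x, y⁆ ∈ J
        rw [hε] at hx hy ⊢
        set a := sumInl R (sumFst R x)
        set b := sumInr R (sumSnd R x)
        set a' := sumInl R (sumFst R y)
        set b' := sumInr R (sumSnd R y)
        -- expanding `⁅a + b + εx, a' + b' + εy⁆`, only cross brackets and multiples of `εx`,
        -- `εy` are left
        have hsplit : ⁅x, y⁆ - sumInl R (sumFst R ⁅x, y⁆) - sumInr R (sumSnd R ⁅x, y⁆) =
            ⁅a, b'⁆ - ⁅a', b⁆ + ⁅a + b, y - a' - b'⁆ + ⁅x - a - b, y⁆ := by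
          simp only [LieHom.map_lie, add_lie, lie_sub, sub_lie, a, b, a', b']
          rw [← lie_skew (sumInr R _) (sumInl R _)]
          abel
        rw [hsplit]
        exact add_mem (add_mem (sub_mem (lie_sumInl_sumInr_mem hJ _ _)
          (lie_sumInl_sumInr_mem hJ _ _)) (J.lie_mem hy)) (lie_mem_left R _ J _ _ hx) }
  exact mem_of_forall_of_mem S (fun xy => by cases xy <;> simp [S, hε]) z

end Sum

end FreeLieAlgebra

section Hopf

variable {R L L' L'' : Type*} [CommRing R] [LieRing L] [LieAlgebra R L] [LieRing L']
  [LieAlgebra R L'] [LieRing L''] [LieAlgebra R L'']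

/-- For the kernel `I` of a free presentation this is the Schur multiplier `(R ∩ F²) / [R, F]`
(Hopf's formula). -/
abbrev HopfQuotient (I : LieIdeal R L) : Type _ :=
  (I ⊓ derivedSeries R L 1).toSubmodule ⧸
    (⁅I, (⊤ : LieIdeal R L)⁆ : LieIdeal R L).toSubmodule.comap
      (I ⊓ derivedSeries R L 1).toSubmodule.subtype

namespace HopfQuotient

variable {I : LieIdeal R L} {J : LieIdeal R L'} {K : LieIdeal R L''}

def mk (x : L) (hx : x ∈ I ⊓ derivedSeries R L 1) : HopfQuotient I :=
  Submodule.Quotient.mk ⟨x, hx⟩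

theorem mk_surjective (q : HopfQuotient I) : ∃ x hx, mk x hx = q := by
  obtain ⟨⟨x, hx⟩, rfl⟩ := Submodule.Quotient.mk_surjective _ q
  exact ⟨x, hx, rfl⟩

@[simp]
theorem mk_zero (h : (0 : L) ∈ I ⊓ derivedSeries R L 1) : mk 0 h = 0 :=
  rfl

theorem mk_add {x y : L} (hx : x ∈ I ⊓ derivedSeries R L 1) (hy : y ∈ I ⊓ derivedSeries R L 1) :
    mk x hx + mk y hy = mk (x + y) (add_mem hx hy) :=
  rfl

theorem mk_smul (c : R) {x : L} (hx : x ∈ I ⊓ derivedSeries R L 1) :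
    c • mk x hx = mk (c • x) ((I ⊓ derivedSeries R L 1).smul_mem c hx) :=
  rfl

theorem mk_eq_mk_iff {x y : L} (hx : x ∈ I ⊓ derivedSeries R L 1)
    (hy : y ∈ I ⊓ derivedSeries R L 1) : mk x hx = mk y hy ↔ x - y ∈ ⁅I, (⊤ : LieIdeal R L)⁆ :=
  Submodule.Quotient.eq _

theorem mk_eq_zero_iff {x : L} (hx : x ∈ I ⊓ derivedSeries R L 1) :
    mk x hx = 0 ↔ x ∈ ⁅I, (⊤ : LieIdeal R L)⁆ :=
  Submodule.Quotient.mk_eq_zero _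

def comapIdeal (V : Submodule R (HopfQuotient I)) : LieIdeal R L where
  carrier := {x | ∃ hx : x ∈ I ⊓ derivedSeries R L 1, mk x hx ∈ V}
  add_mem' := fun ⟨hx, hxV⟩ ⟨hy, hyV⟩ => ⟨add_mem hx hy, V.add_mem hxV hyV⟩
  zero_mem' := ⟨zero_mem _, V.zero_mem⟩
  smul_mem' c _ := fun ⟨_, hxV⟩ => ⟨_, V.smul_mem c hxV⟩
  lie_mem := fun {y _} ⟨hx, _⟩ => by
    have hyx := lie_mem_lie_top_of_mem_right ((LieSubmodule.mem_inf _ _ _).1 hx).1 y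
    exact ⟨mem_inf_derivedSeries_of_mem_lie_top hyx, (mk_eq_zero_iff _).2 hyx ▸ V.zero_mem⟩

def map (f : L →ₗ⁅R⁆ L') (hf : ∀ x ∈ I, f x ∈ J) : HopfQuotient I →ₗ[R] HopfQuotient J :=
  Submodule.mapQ _ _ ((f : L →ₗ[R] L').restrict fun _ => f.map_mem_inf_derivedSeries hf)
    fun _ => f.map_mem_lie_top hf

@[simp]
theorem map_mk (f : L →ₗ⁅R⁆ L') (hf : ∀ x ∈ I, f x ∈ J) {x : L}
    (hx : x ∈ I ⊓ derivedSeries R L 1) :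
    map f hf (mk x hx) = mk (f x) (f.map_mem_inf_derivedSeries hf hx) :=
  rfl

theorem map_comp (f : L →ₗ⁅R⁆ L') (g : L' →ₗ⁅R⁆ L'') (hf : ∀ x ∈ I, f x ∈ J)
    (hg : ∀ x ∈ J, g x ∈ K) :
    (map g hg).comp (map f hf) = map (g.comp f) fun x hx => hg _ (hf x hx) :=
  LinearMap.ext fun q => by
    obtain ⟨x, hx, rfl⟩ := mk_surjective q
    rfl

theorem map_eq_id {θ : L →ₗ⁅R⁆ L} (hθ : ∀ x ∈ I, θ x ∈ I) (h : ∀ x, θ x - x ∈ I) :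
    map θ hθ = LinearMap.id :=
  LinearMap.ext fun q => by
    obtain ⟨x, hx, rfl⟩ := mk_surjective q
    rw [map_mk, LinearMap.id_apply, mk_eq_mk_iff]
    exact sub_mem_lie_top_of_forall_sub_mem (g := LieHom.id) h
      ((LieSubmodule.mem_inf _ _ _).1 hx).2

open FreeLieAlgebra in
theorem nonempty_linearEquiv_of_free {X Y M : Type*} [LieRing M] [LieAlgebra R M]
    (π₁ : FreeLieAlgebra R X →ₗ⁅R⁆ M) (π₂ : FreeLieAlgebra R Y →ₗ⁅R⁆ M)
    (h₁ : Function.Surjective π₁) (h₂ : Function.Surjective π₂) :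
    Nonempty (HopfQuotient π₁.ker ≃ₗ[R] HopfQuotient π₂.ker) := by
  obtain ⟨α, hα⟩ := exists_comp_eq h₂ π₁
  obtain ⟨β, hβ⟩ := exists_comp_eq h₁ π₂
  have hαβ (y) : α (β y) - y ∈ π₂.ker := by
    simp [LieHom.mem_ker, ← LieHom.comp_apply π₂ α, hα, ← LieHom.comp_apply π₁ β, hβ]
  have hβα (x) : β (α x) - x ∈ π₁.ker := by
    simp [LieHom.mem_ker, ← LieHom.comp_apply π₁ β, hβ, ← LieHom.comp_apply π₂ α, hα]
  exact ⟨.ofLinearMap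
    (map α (LieHom.map_mem_ker_of_comp_eq (hα.trans (LieHom.id_comp π₁).symm)))
    (map β (LieHom.map_mem_ker_of_comp_eq (hβ.trans (LieHom.id_comp π₂).symm)))
    (by rw [map_comp]; exact map_eq_id _ hαβ) (by rw [map_comp]; exact map_eq_id _ hβα)⟩

end HopfQuotient

end Hopf

section CrossExtension

open TensorProduct

variable (F : Type*) [Field F] (A B : Type*) [LieRing A] [LieAlgebra F A] [LieRing B]
  [LieAlgebra F B]

noncomputable def abQuotMk (L : Type*) [LieRing L] [LieAlgebra F L] : L →ₗ[F] AbQuot F L :=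
  (derivedSeries F L 1).toSubmodule.mkQ

variable {F} in
@[simp] theorem abQuotMk_lie {L : Type*} [LieRing L] [LieAlgebra F L] (x y : L) :
    abQuotMk F L ⁅x, y⁆ = 0 :=
  (Submodule.Quotient.mk_eq_zero _).2 (lie_mem_derivedSeries_one x y)

/-- With the bracket below, a central extension of `A × B` by `A^ab ⊗ B^ab` in which
`⁅(a, 0, 0), (0, b, 0)⁆ = (0, 0, ā ⊗ b̄)`. -/
abbrev CrossExtension : Type _ := A × B × (AbQuot F A ⊗[F] AbQuot F B)

noncomputable instance : LieRing (CrossExtension F A B) where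
  bracket x y := (⁅x.1, y.1⁆, ⁅x.2.1, y.2.1⁆,
    abQuotMk F A x.1 ⊗ₜ abQuotMk F B y.2.1 - abQuotMk F A y.1 ⊗ₜ abQuotMk F B x.2.1)
  add_lie x y z := by
    ext
    · exact add_lie _ _ _
    · exact add_lie _ _ _
    · simp only [Prod.snd_add, Prod.fst_add, map_add, add_tmul, tmul_add]
      abel
  lie_add x y z := by
    ext
    · exact lie_add _ _ _
    · exact lie_add _ _ _
    · simp only [Prod.snd_add, Prod.fst_add, map_add, add_tmul, tmul_add]
      abel
  lie_self x := by ext <;> simp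
  leibniz_lie x y z := by ext <;> simp

@[simp] theorem CrossExtension.bracket_def (x y : CrossExtension F A B) :
    ⁅x, y⁆ = (⁅x.1, y.1⁆, ⁅x.2.1, y.2.1⁆,
      abQuotMk F A x.1 ⊗ₜ abQuotMk F B y.2.1 - abQuotMk F A y.1 ⊗ₜ abQuotMk F B x.2.1) :=
  rfl

noncomputable instance : LieAlgebra F (CrossExtension F A B) where
  lie_smul t x y := by
    ext
    · exact lie_smul _ _ _
    · exact lie_smul _ _ _
    · simp [smul_sub, smul_tmul']

end CrossExtension

section DirectSum

open FreeLieAlgebra HopfQuotient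
open scoped TensorProduct

variable (F : Type*) [Field F] (A B : Type*) [LieRing A] [LieAlgebra F A] [LieRing B]
  [LieAlgebra F B]

variable {F} in
@[simp] theorem presHom_of {L : Type*} [LieRing L] [LieAlgebra F L] (x : L) :
    presHom F L (of F x) = x := by
  simp [presHom]

theorem presHom_surjective (L : Type*) [LieRing L] [LieAlgebra F L] :
    Function.Surjective (presHom F L) :=
  fun x => ⟨of F x, presHom_of x⟩

noncomputable def coprodPres : FreeLieAlgebra F (A ⊕ B) →ₗ⁅F⁆ A × B :=
  lift F (Sum.elim (LieHom.inl F A B) (LieHom.inr F A B))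

@[simp] theorem coprodPres_of_inl (a : A) : coprodPres F A B (of F (Sum.inl a)) = (a, 0) := by
  simp [coprodPres]

@[simp] theorem coprodPres_of_inr (b : B) : coprodPres F A B (of F (Sum.inr b)) = (0, b) := by
  simp [coprodPres]

theorem coprodPres_surjective : Function.Surjective (coprodPres F A B) := fun ab =>
  ⟨of F (Sum.inl ab.1) + of F (Sum.inr ab.2), by simp⟩

theorem coprodPres_comp_sumInl :
    (coprodPres F A B).comp (sumInl F) = (LieHom.inl F A B).comp (presHom F A) :=
  hom_ext fun _ => by simp

theorem coprodPres_comp_sumInr :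
    (coprodPres F A B).comp (sumInr F) = (LieHom.inr F A B).comp (presHom F B) :=
  hom_ext fun _ => by simp

theorem presHom_comp_sumFst :
    (presHom F A).comp (sumFst F) = (LieHom.fst F A B).comp (coprodPres F A B) :=
  hom_ext fun ab => by cases ab <;> simp

theorem presHom_comp_sumSnd :
    (presHom F B).comp (sumSnd F) = (LieHom.snd F A B).comp (coprodPres F A B) :=
  hom_ext fun ab => by cases ab <;> simp

noncomputable def hopfInl :
    HopfQuotient (presHom F A).ker →ₗ[F] HopfQuotient (coprodPres F A B).ker :=
  map (sumInl F) (LieHom.map_mem_ker_of_comp_eq (coprodPres_comp_sumInl F A B))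

noncomputable def hopfInr :
    HopfQuotient (presHom F B).ker →ₗ[F] HopfQuotient (coprodPres F A B).ker :=
  map (sumInr F) (LieHom.map_mem_ker_of_comp_eq (coprodPres_comp_sumInr F A B))

noncomputable def hopfFst :
    HopfQuotient (coprodPres F A B).ker →ₗ[F] HopfQuotient (presHom F A).ker :=
  map (sumFst F) (LieHom.map_mem_ker_of_comp_eq (presHom_comp_sumFst F A B))

noncomputable def hopfSnd :
    HopfQuotient (coprodPres F A B).ker →ₗ[F] HopfQuotient (presHom F B).ker :=
  map (sumSnd F) (LieHom.map_mem_ker_of_comp_eq (presHom_comp_sumSnd F A B))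

theorem lie_of_inl_of_inr_mem (a : A) (b : B) :
    ⁅of F (Sum.inl a : A ⊕ B), of F (Sum.inr b)⁆ ∈
      (coprodPres F A B).ker ⊓ derivedSeries F (FreeLieAlgebra F (A ⊕ B)) 1 :=
  (LieSubmodule.mem_inf _ _ _).2 ⟨by simp [LieHom.mem_ker], lie_mem_derivedSeries_one _ _⟩

noncomputable def crossClass : A →ₗ[F] B →ₗ[F] HopfQuotient (coprodPres F A B).ker :=
  LinearMap.mk₂ F (fun a b => HopfQuotient.mk _ (lie_of_inl_of_inr_mem F A B a b))
    (fun a a' b => by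
      rw [mk_add, mk_eq_mk_iff, ← add_lie, ← sub_lie]
      exact lie_mem_lie_top_of_mem_left (by simp [LieHom.mem_ker]) _)
    (fun c a b => by
      rw [mk_smul, mk_eq_mk_iff, ← smul_lie, ← sub_lie]
      exact lie_mem_lie_top_of_mem_left (by simp [LieHom.mem_ker]) _)
    (fun a b b' => by
      rw [mk_add, mk_eq_mk_iff, ← lie_add, ← lie_sub]
      exact lie_mem_lie_top_of_mem_right (by simp [LieHom.mem_ker]) _)
    (fun c a b => by
      rw [mk_smul, mk_eq_mk_iff, ← lie_smul, ← lie_sub]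
      exact lie_mem_lie_top_of_mem_right (by simp [LieHom.mem_ker]) _)

theorem crossClass_apply (a : A) (b : B) :
    crossClass F A B a b = HopfQuotient.mk _ (lie_of_inl_of_inr_mem F A B a b) :=
  rfl

theorem crossClass_lie_left (a a' : A) (b : B) : crossClass F A B ⁅a, a'⁆ b = 0 := by
  rw [crossClass_apply, mk_eq_zero_iff]
  exact lie_mem_lie_top_of_sub_lie_mem (x₁ := of F (Sum.inl a)) (x₂ := of F (Sum.inl a'))
    (by simp [LieHom.mem_ker]) (by simp [LieHom.mem_ker]) (by simp [LieHom.mem_ker])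

theorem crossClass_lie_right (a : A) (b b' : B) : crossClass F A B a ⁅b, b'⁆ = 0 := by
  rw [crossClass_apply, mk_eq_zero_iff, ← lie_skew, neg_mem_iff]
  exact lie_mem_lie_top_of_sub_lie_mem (x₁ := of F (Sum.inr b)) (x₂ := of F (Sum.inr b'))
    (by simp [LieHom.mem_ker]) (by simp [LieHom.mem_ker]) (by simp [LieHom.mem_ker])

noncomputable def tensorToHopf :
    AbQuot F A ⊗[F] AbQuot F B →ₗ[F] HopfQuotient (coprodPres F A B).ker :=
  TensorProduct.lift <| (crossClass F A B).liftQ₂ _ _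
    (derivedSeries_one_toSubmodule_le fun a a' =>
      LinearMap.ext fun b => crossClass_lie_left F A B a a' b)
    (derivedSeries_one_toSubmodule_le fun b b' =>
      LinearMap.ext fun a => crossClass_lie_right F A B a b b')

theorem tensorToHopf_tmul (a : A) (b : B) :
    tensorToHopf F A B (abQuotMk F A a ⊗ₜ abQuotMk F B b) = crossClass F A B a b :=
  rfl

noncomputable def crossExtensionLift : FreeLieAlgebra F (A ⊕ B) →ₗ⁅F⁆ CrossExtension F A B :=
  lift F (Sum.elim (fun a => (a, 0, 0)) (fun b => (0, b, 0)))

@[simp] theorem crossExtensionLift_of_inl (a : A) :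
    crossExtensionLift F A B (of F (Sum.inl a)) = (a, 0, 0) := by
  simp [crossExtensionLift]

@[simp] theorem crossExtensionLift_of_inr (b : B) :
    crossExtensionLift F A B (of F (Sum.inr b)) = (0, b, 0) := by
  simp [crossExtensionLift]

theorem crossExtensionLift_fst_snd (x : FreeLieAlgebra F (A ⊕ B)) :
    ((crossExtensionLift F A B x).1, (crossExtensionLift F A B x).2.1) = coprodPres F A B x := by
  let proj : CrossExtension F A B →ₗ⁅F⁆ A × B :=
    { toFun x := (x.1, x.2.1)
      map_add' _ _ := rfl
      map_smul' _ _ := rfl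
      map_lie' := rfl }
  exact LieHom.congr_fun (show proj.comp (crossExtensionLift F A B) = coprodPres F A B from
    hom_ext fun ab => by cases ab <;> simp [proj]) x

theorem crossExtensionLift_sumInl (u : FreeLieAlgebra F A) :
    crossExtensionLift F A B (sumInl F u) = (presHom F A u, 0, 0) := by
  let incl : A →ₗ⁅F⁆ CrossExtension F A B :=
    { toFun a := (a, 0, 0)
      map_add' _ _ := by simp
      map_smul' _ _ := by simp
      map_lie' := by simp }
  exact LieHom.congr_fun (show (crossExtensionLift F A B).comp (sumInl F) = incl.comp (presHom F A)
    from hom_ext fun a => by simp [incl]) u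

theorem crossExtensionLift_sumInr (v : FreeLieAlgebra F B) :
    crossExtensionLift F A B (sumInr F v) = (0, presHom F B v, 0) := by
  let incl : B →ₗ⁅F⁆ CrossExtension F A B :=
    { toFun b := (0, b, 0)
      map_add' _ _ := by simp
      map_smul' _ _ := by simp
      map_lie' := by simp }
  exact LieHom.congr_fun (show (crossExtensionLift F A B).comp (sumInr F) = incl.comp (presHom F B)
    from hom_ext fun b => by simp [incl]) v

theorem crossExtensionLift_eq_zero {x : FreeLieAlgebra F (A ⊕ B)}
    (hx : x ∈ ⁅(coprodPres F A B).ker, (⊤ : LieIdeal F (FreeLieAlgebra F (A ⊕ B)))⁆) :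
    crossExtensionLift F A B x = 0 := by
  refine ((LieSubmodule.lie_le_iff _ _ _).2 fun y hy z _ => ?_ :
    _ ≤ (crossExtensionLift F A B).ker) hx
  obtain ⟨hy₁, hy₂⟩ := Prod.mk_eq_zero.1 ((crossExtensionLift_fst_snd F A B y).trans hy)
  rw [LieHom.mem_ker, LieHom.map_lie, CrossExtension.bracket_def, hy₁, hy₂]
  simp

noncomputable def hopfToTensor :
    HopfQuotient (coprodPres F A B).ker →ₗ[F] AbQuot F A ⊗[F] AbQuot F B :=
  Submodule.liftQ _ (LinearMap.snd F B _ ∘ₗ LinearMap.snd F A _ ∘ₗ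
      (crossExtensionLift F A B : _ →ₗ[F] CrossExtension F A B) ∘ₗ Submodule.subtype _)
    fun x hx => by
      change (crossExtensionLift F A B x).2.2 = 0
      rw [crossExtensionLift_eq_zero F A B (x := x) hx]
      rfl

theorem hopfToTensor_mk {x : FreeLieAlgebra F (A ⊕ B)}
    (hx : x ∈ (coprodPres F A B).ker ⊓ derivedSeries F (FreeLieAlgebra F (A ⊕ B)) 1) :
    hopfToTensor F A B (HopfQuotient.mk x hx) = (crossExtensionLift F A B x).2.2 :=
  rfl

theorem abQuot_tensor_ext {M : Type*} [AddCommGroup M] [Module F M]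
    {f g : AbQuot F A ⊗[F] AbQuot F B →ₗ[F] M}
    (h : ∀ a b, f (abQuotMk F A a ⊗ₜ abQuotMk F B b) = g (abQuotMk F A a ⊗ₜ abQuotMk F B b)) :
    f = g :=
  TensorProduct.ext' fun x y => by
    obtain ⟨a, rfl⟩ := Submodule.mkQ_surjective _ x
    obtain ⟨b, rfl⟩ := Submodule.mkQ_surjective _ y
    exact h a b

@[simp] theorem hopfFst_hopfInl (q : HopfQuotient (presHom F A).ker) :
    hopfFst F A B (hopfInl F A B q) = q := by
  obtain ⟨x, hx, rfl⟩ := mk_surjective q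
  simp [hopfFst, hopfInl]

@[simp] theorem hopfSnd_hopfInr (q : HopfQuotient (presHom F B).ker) :
    hopfSnd F A B (hopfInr F A B q) = q := by
  obtain ⟨x, hx, rfl⟩ := mk_surjective q
  simp [hopfSnd, hopfInr]

@[simp] theorem hopfSnd_hopfInl (q : HopfQuotient (presHom F A).ker) :
    hopfSnd F A B (hopfInl F A B q) = 0 := by
  obtain ⟨x, hx, rfl⟩ := mk_surjective q
  simp [hopfSnd, hopfInl]

@[simp] theorem hopfFst_hopfInr (q : HopfQuotient (presHom F B).ker) :
    hopfFst F A B (hopfInr F A B q) = 0 := by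
  obtain ⟨x, hx, rfl⟩ := mk_surjective q
  simp [hopfFst, hopfInr]

@[simp] theorem hopfToTensor_hopfInl (q : HopfQuotient (presHom F A).ker) :
    hopfToTensor F A B (hopfInl F A B q) = 0 := by
  obtain ⟨x, hx, rfl⟩ := mk_surjective q
  simp [hopfInl, hopfToTensor_mk, crossExtensionLift_sumInl]

@[simp] theorem hopfToTensor_hopfInr (q : HopfQuotient (presHom F B).ker) :
    hopfToTensor F A B (hopfInr F A B q) = 0 := by
  obtain ⟨x, hx, rfl⟩ := mk_surjective q
  simp [hopfInr, hopfToTensor_mk, crossExtensionLift_sumInr]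

@[simp] theorem hopfFst_tensorToHopf (t : AbQuot F A ⊗[F] AbQuot F B) :
    hopfFst F A B (tensorToHopf F A B t) = 0 :=
  LinearMap.congr_fun (f := (hopfFst F A B).comp (tensorToHopf F A B)) (g := 0)
    (abQuot_tensor_ext F A B fun a b => by
      rw [LinearMap.comp_apply, tensorToHopf_tmul, crossClass_apply]
      simp [hopfFst]) t

@[simp] theorem hopfSnd_tensorToHopf (t : AbQuot F A ⊗[F] AbQuot F B) :
    hopfSnd F A B (tensorToHopf F A B t) = 0 :=
  LinearMap.congr_fun (f := (hopfSnd F A B).comp (tensorToHopf F A B)) (g := 0)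
    (abQuot_tensor_ext F A B fun a b => by
      rw [LinearMap.comp_apply, tensorToHopf_tmul, crossClass_apply]
      simp [hopfSnd]) t

@[simp] theorem hopfToTensor_tensorToHopf (t : AbQuot F A ⊗[F] AbQuot F B) :
    hopfToTensor F A B (tensorToHopf F A B t) = t :=
  LinearMap.congr_fun (f := (hopfToTensor F A B).comp (tensorToHopf F A B)) (g := LinearMap.id)
    (abQuot_tensor_ext F A B fun a b => by
      rw [LinearMap.comp_apply, tensorToHopf_tmul, crossClass_apply, hopfToTensor_mk]
      simp) t

noncomputable def prodToHopf : HopfQuotient (presHom F A).ker × HopfQuotient (presHom F B).ker ×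
    (AbQuot F A ⊗[F] AbQuot F B) →ₗ[F] HopfQuotient (coprodPres F A B).ker :=
  (hopfInl F A B).coprod ((hopfInr F A B).coprod (tensorToHopf F A B))

noncomputable def hopfToProd : HopfQuotient (coprodPres F A B).ker →ₗ[F]
    HopfQuotient (presHom F A).ker × HopfQuotient (presHom F B).ker ×
      (AbQuot F A ⊗[F] AbQuot F B) :=
  (hopfFst F A B).prod ((hopfSnd F A B).prod (hopfToTensor F A B))

theorem hopfToProd_prodToHopf : Function.LeftInverse (hopfToProd F A B) (prodToHopf F A B) :=
  fun _ => by simp [hopfToProd, prodToHopf]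

theorem prodToHopf_surjective : Function.Surjective (prodToHopf F A B) := by
  intro q
  obtain ⟨x, hx, rfl⟩ := mk_surjective q
  have hcross (a : A) (b : B) : ⁅of F (Sum.inl a : A ⊕ B), of F (Sum.inr b)⁆ ∈
      comapIdeal (LinearMap.range (tensorToHopf F A B)) :=
    ⟨lie_of_inl_of_inr_mem F A B a b, abQuotMk F A a ⊗ₜ abQuotMk F B b, rfl⟩
  obtain ⟨_, t, ht⟩ := sub_sumInl_sub_sumInr_mem hcross x
  refine ⟨(hopfFst F A B (HopfQuotient.mk x hx), hopfSnd F A B (HopfQuotient.mk x hx), t), ?_⟩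
  simp only [prodToHopf, LinearMap.coprod_apply, ht, hopfInl, hopfInr, hopfFst, hopfSnd, map_mk,
    mk_add]
  congr 1
  abel

noncomputable def coprodHopfEquiv : HopfQuotient (coprodPres F A B).ker ≃ₗ[F]
    HopfQuotient (presHom F A).ker × HopfQuotient (presHom F B).ker ×
      (AbQuot F A ⊗[F] AbQuot F B) :=
  (LinearEquiv.ofBijective (prodToHopf F A B)
    ⟨(hopfToProd_prodToHopf F A B).injective, prodToHopf_surjective F A B⟩).symm

end DirectSum

/-- `M(A ⊕ B) ≅ M(A) ⊕ M(B) ⊕ (A^ab ⊗ B^ab)`. -/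
theorem schur_multiplier_of_direct_sum (F : Type u) [Field F]
    (A B : Type u) [LieRing A] [LieAlgebra F A] [LieRing B] [LieAlgebra F B] :
    Nonempty (Multiplier F (A × B) ≃ₗ[F]
      (Multiplier F A × Multiplier F B × TensorProduct F (AbQuot F A) (AbQuot F B))) := by
  obtain ⟨e⟩ := HopfQuotient.nonempty_linearEquiv_of_free (presHom F (A × B))
    (coprodPres F A B) (presHom_surjective F (A × B)) (coprodPres_surjective F A B)
  exact ⟨e.trans (coprodHopfEquiv F A B)⟩
end

section
/- If L is a finite-dimensional nilpotent Lie algebra of dimension n with dim L² = 1, then L is isomorphic to H(m) ⊕ A(n−2m−1) for some m ≥ 1, where H(m) is the Heisenberg Lie algebra of dimension 2m+1. -/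
open LieAlgebra Matrix Module


open LieAlgebra

open Matrix
open LieAlgebra

universe u v

/-!
Since `L` is nilpotent, the eigenvalue of `ad x` on the line `L² = F z` is zero, so `z` is central
and `⁅x, y⁆ = B x y • z` for an alternating form `B` whose radical contains `z`. A symplectic
family `e₁, …, eₘ, f₁, …, fₘ` for `B` spans a complement of the radical, and the radical splits
as `F z ⊕ A`; in the resulting coordinates the bracket of `L` is that of `H(m) ⊕ A(k)`.
Finally `m ≥ 1` because `L` is not abelian, and `k = n - 2m - 1` by counting dimensions.
-/

namespace LinearMap

variable {F V : Type*} [Field F] [AddCommGroup V] [Module F V] {B : V →ₗ[F] V →ₗ[F] F}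

def IsSymplecticFamily (B : V →ₗ[F] V →ₗ[F] F) {m : ℕ} (e f : Fin m → V) : Prop :=
  ∀ i j, B (e i) (e j) = 0 ∧ B (f i) (f j) = 0 ∧ B (e i) (f j) = if i = j then 1 else 0

/-- For a symplectic family, `v - B.symplecticRemainder e f v` is the `B`-orthogonal projection of
`v` onto the span of the family. -/
def symplecticRemainder (B : V →ₗ[F] V →ₗ[F] F) {m : ℕ} (e f : Fin m → V) (v : V) : V :=
  v - ∑ i, (B (e i) v • f i - B (f i) v • e i)

theorem exists_mem_apply_eq_one {W : Submodule F V} (h : ∃ x ∈ W, ∃ y ∈ W, B x y ≠ 0) :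
    ∃ e ∈ W, ∃ f ∈ W, B e f = 1 := by
  obtain ⟨e, he, y, hy, hey⟩ := h
  exact ⟨e, he, (B e y)⁻¹ • y, W.smul_mem _ hy, by simp [hey]⟩

theorem IsAlt.sub_mem_ker_inf_ker (hB : B.IsAlt) {e f : V} (hef : B e f = 1) (v : V) :
    v - (B e v • f - B f v • e) ∈ ker (B e) ⊓ ker (B f) := by
  have hfe : B f e = -1 := by rw [← hB.neg, hef]
  simp [hef, hfe, hB.self_eq_zero]

theorem IsAlt.isSymplecticFamily_cons (hB : B.IsAlt) {m : ℕ} {e f : V} (hef : B e f = 1)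
    {e' f' : Fin m → V} (he' : ∀ i, e' i ∈ ker (B e) ⊓ ker (B f))
    (hf' : ∀ i, f' i ∈ ker (B e) ⊓ ker (B f)) (h : B.IsSymplecticFamily e' f') :
    B.IsSymplecticFamily (Fin.cons e e') (Fin.cons f f') := by
  simp only [Submodule.mem_inf, mem_ker] at he' hf'
  have hB' : ∀ {x y}, B x y = 0 → B y x = 0 := hB.eq_iff.mp
  intro i j
  cases i using Fin.cases <;> cases j using Fin.cases <;>
    simp [hef, hB.self_eq_zero, he', hf', hB' (he' _).1, hB' (he' _).2, hB' (hf' _).2, h _ _,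
      Fin.succ_ne_zero, (Fin.succ_ne_zero _).symm]

theorem IsAlt.symplecticRemainder_cons (hB : B.IsAlt) {m : ℕ} {e f : V} {e' f' : Fin m → V}
    (he' : ∀ i, e' i ∈ ker (B e) ⊓ ker (B f)) (hf' : ∀ i, f' i ∈ ker (B e) ⊓ ker (B f))
    (v : V) :
    B.symplecticRemainder (Fin.cons e e') (Fin.cons f f') v =
      B.symplecticRemainder e' f' (v - (B e v • f - B f v • e)) := by
  have hcoef : ∀ x ∈ ker (B e) ⊓ ker (B f), B x (v - (B e v • f - B f v • e)) = B x v :=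
    fun x hx => by simp [hB.eq_iff.mp hx.1, hB.eq_iff.mp hx.2]
  simp only [symplecticRemainder, Fin.sum_univ_succ, Fin.cons_zero, Fin.cons_succ,
    hcoef _ (he' _), hcoef _ (hf' _)]
  abel

theorem IsAlt.exists_isSymplecticFamily [FiniteDimensional F V] (hB : B.IsAlt)
    (W : Submodule F V) :
    ∃ (m : ℕ) (e f : Fin m → V), (∀ i, e i ∈ W ∧ f i ∈ W) ∧ B.IsSymplecticFamily e f ∧
      ∀ v ∈ W, ∀ w ∈ W, B (B.symplecticRemainder e f v) w = 0 := by
  induction hn : finrank F W using Nat.strong_induction_on generalizing W with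
  | _ n ih =>
    by_cases hzero : ∀ x ∈ W, ∀ y ∈ W, B x y = 0
    · exact ⟨0, ![], ![], nofun, nofun, fun v hv w hw => by
        simpa [symplecticRemainder] using hzero v hv w hw⟩
    push Not at hzero
    obtain ⟨e, he, f, hf, hef⟩ := exists_mem_apply_eq_one hzero
    set W' := W ⊓ (ker (B e) ⊓ ker (B f))
    have hlt : W' < W := by
      refine lt_of_le_of_ne inf_le_left fun h => ?_
      have : B f e = 0 := (h ▸ he : e ∈ W').2.2
      rw [← hB.neg, hef] at this
      norm_num at this
    obtain ⟨m, e', f', hmem, hfam, hrad⟩ :=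
      ih _ (hn ▸ Submodule.finrank_lt_finrank_of_lt hlt) W' rfl
    have hproj : ∀ v ∈ W, v - (B e v • f - B f v • e) ∈ W' := fun v hv =>
      ⟨W.sub_mem hv (W.sub_mem (W.smul_mem _ hf) (W.smul_mem _ he)),
        hB.sub_mem_ker_inf_ker hef v⟩
    refine ⟨m + 1, Fin.cons e e', Fin.cons f f', fun i => ?_,
      hB.isSymplecticFamily_cons hef (fun i => (hmem i).1.2) (fun i => (hmem i).2.2) hfam,
      fun v hv w hw => ?_⟩
    · cases i using Fin.cases
      · exact ⟨he, hf⟩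
      · exact ⟨(hmem _).1.1, (hmem _).2.1⟩
    rw [hB.symplecticRemainder_cons (fun i => (hmem i).1.2) (fun i => (hmem i).2.2)]
    set r := B.symplecticRemainder e' f' (v - (B e v • f - B f v • e))
    have hr : r ∈ W' := W'.sub_mem (hproj v hv) (W'.sum_mem fun i _ =>
      W'.sub_mem (W'.smul_mem _ (hmem i).2) (W'.smul_mem _ (hmem i).1))
    -- `r` is orthogonal to `e` and `f`, so only the component of `w` in `W'` matters
    have hrw : B r w = B r (w - (B e w • f - B f w • e)) := by
      simp [hB.eq_iff.mp hr.2.1, hB.eq_iff.mp hr.2.2]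
    rw [hrw]
    exact hrad _ (hproj v hv) _ (hproj w hw)

def symplecticMap (B : V →ₗ[F] V →ₗ[F] F) {m : ℕ} (e f : Fin m → V) :
    (Fin m → F) × (Fin m → F) × ker B →ₗ[F] V :=
  (Fintype.linearCombination F e).coprod ((Fintype.linearCombination F f).coprod (ker B).subtype)

theorem symplecticMap_apply {m : ℕ} (e f : Fin m → V) (p : (Fin m → F) × (Fin m → F) × ker B) :
    B.symplecticMap e f p = ∑ i, p.1 i • e i + (∑ i, p.2.1 i • f i + p.2.2) := rfl

theorem IsAlt.apply_symplecticMap (hB : B.IsAlt) {m : ℕ} {e f : Fin m → V}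
    (h : B.IsSymplecticFamily e f) (p q : (Fin m → F) × (Fin m → F) × ker B) :
    B (B.symplecticMap e f p) (B.symplecticMap e f q) = p.1 ⬝ᵥ q.2.1 - q.1 ⬝ᵥ p.2.1 := by
  have hfe : ∀ i j, B (f i) (e j) = -if j = i then 1 else 0 := fun i j => by
    rw [← hB.neg, (h j i).2.2]
  have hker : ∀ w (r : ker B), B w r = 0 := fun w r => hB.eq_iff.mp (by simp)
  simp [symplecticMap_apply, hker, (h _ _).1, (h _ _).2.1, (h _ _).2.2, hfe, dotProduct,
    sub_eq_add_neg, mul_comm]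

theorem IsAlt.symplecticMap_injective (hB : B.IsAlt) {m : ℕ} {e f : Fin m → V}
    (h : B.IsSymplecticFamily e f) : Function.Injective (B.symplecticMap e f) := by
  classical
  rw [← ker_eq_bot, Submodule.eq_bot_iff]
  rintro ⟨a, b, r⟩ hp
  rw [mem_ker] at hp
  have ha : a = 0 := funext fun j => by
    simpa [hp] using (hB.apply_symplecticMap h (a, b, r) (0, Pi.single j 1, 0)).symm
  have hb : b = 0 := funext fun j => by
    simpa [hp] using (hB.apply_symplecticMap h (Pi.single j 1, 0, 0) (a, b, r)).symm
  subst ha hb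
  simpa [symplecticMap_apply] using hp

theorem symplecticMap_surjective {m : ℕ} {e f : Fin m → V}
    (hrad : ∀ v, B.symplecticRemainder e f v ∈ ker B) :
    Function.Surjective (B.symplecticMap e f) := fun v =>
  ⟨(fun i => -B (f i) v, fun i => B (e i) v, ⟨_, hrad v⟩), by
    simp only [symplecticMap_apply, symplecticRemainder, Finset.sum_sub_distrib, neg_smul,
      Finset.sum_neg_distrib]
    abel⟩

theorem IsAlt.exists_symplecticEquiv [FiniteDimensional F V] (hB : B.IsAlt) :
    ∃ (m : ℕ) (D : ((Fin m → F) × (Fin m → F) × ker B) ≃ₗ[F] V),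
      (∀ p q, B (D p) (D q) = p.1 ⬝ᵥ q.2.1 - q.1 ⬝ᵥ p.2.1) ∧ ∀ r : ker B, D (0, 0, r) = r := by
  obtain ⟨m, e, f, -, h, hrad⟩ := hB.exists_isSymplecticFamily ⊤
  let D := LinearEquiv.ofBijective _ ⟨hB.symplecticMap_injective h,
    symplecticMap_surjective fun v => ext (hrad v trivial · trivial)⟩
  exact ⟨m, D, hB.apply_symplecticMap h, fun r =>
    (by simp [symplecticMap_apply] : B.symplecticMap e f (0, 0, r) = r)⟩

end LinearMap

theorem exists_linearEquiv_prod_fin_of_ne_zero (F : Type*) {M : Type*} [Field F] [AddCommGroup M]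
    [Module F M] [FiniteDimensional F M] {z : M} (hz : z ≠ 0) :
    ∃ (k : ℕ) (Ψ : (F × (Fin k → F)) ≃ₗ[F] M), ∀ t : F, Ψ (t, 0) = t • z := by
  obtain ⟨C, hC⟩ := Submodule.exists_isCompl (F ∙ z)
  exact ⟨finrank F C, (LinearEquiv.prodCongr (LinearEquiv.toSpanNonzeroSingleton F M z hz)
    (finBasis F C).equivFun.symm).trans (Submodule.prodEquivOfIsCompl _ _ hC), fun t => by simp⟩

section Heisenberg

variable {F : Type*} [Field F]

theorem finrank_heis (m : ℕ) : finrank F (Heis F m) = 2 * m + 1 := by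
  change finrank F ((Fin m → F) × (Fin m → F) × F) = _
  simp only [finrank_prod, finrank_fin_fun, finrank_self]
  ring

theorem finrank_abLie (k : ℕ) : finrank F (AbLie F k) = k :=
  finrank_fin_fun F

theorem LinearMap.IsAlt.exists_heis_prod_linearEquiv {V : Type*} [AddCommGroup V] [Module F V]
    [FiniteDimensional F V] {B : V →ₗ[F] V →ₗ[F] F} (hB : B.IsAlt) {z : V} (hz : z ≠ 0)
    (hzB : B z = 0) :
    ∃ (m k : ℕ) (E : (Heis F m × AbLie F k) ≃ₗ[F] V),
      (∀ p q, B (E p) (E q) = p.1.1 ⬝ᵥ q.1.2.1 - q.1.1 ⬝ᵥ p.1.2.1) ∧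
        ∀ t : F, E ((0, 0, t), 0) = t • z := by
  obtain ⟨m, D, hD, hD0⟩ := hB.exists_symplecticEquiv
  obtain ⟨k, Ψ, hΨ⟩ := exists_linearEquiv_prod_fin_of_ne_zero F
    (show (⟨z, hzB⟩ : ker B) ≠ 0 from fun h => hz (congrArg Subtype.val h))
  let E : (Heis F m × AbLie F k) ≃ₗ[F] V :=
    (LinearEquiv.prodAssoc F (Fin m → F) ((Fin m → F) × F) (Fin k → F)).trans <|
      (LinearEquiv.prodCongr (LinearEquiv.refl F _) ((LinearEquiv.prodAssoc F _ _ _).trans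
        (LinearEquiv.prodCongr (LinearEquiv.refl F _) Ψ))).trans D
  refine ⟨m, k, E, fun p q => hD _ _, fun t => ?_⟩
  change D (0, 0, Ψ (t, 0)) = t • z
  rw [hΨ, hD0]
  rfl

theorem nonempty_lieEquiv_heis_prod {L : Type*} [LieRing L] [LieAlgebra F L] {m k : ℕ} {z : L}
    {B : L →ₗ[F] L →ₗ[F] F} (hB : ∀ x y, ⁅x, y⁆ = B x y • z)
    (E : (Heis F m × AbLie F k) ≃ₗ[F] L)
    (hE : ∀ p q, B (E p) (E q) = p.1.1 ⬝ᵥ q.1.2.1 - q.1.1 ⬝ᵥ p.1.2.1)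
    (hEz : ∀ t : F, E ((0, 0, t), 0) = t • z) :
    Nonempty ((Heis F m × AbLie F k) ≃ₗ⁅F⁆ L) :=
  ⟨LieEquiv.ofBijective { E.toLinearMap with
    map_lie' := fun {p q} => by
      change E ((0, 0, _), 0) = ⁅E p, E q⁆
      rw [hEz, hB, hE] } E.bijective⟩

end Heisenberg

theorem LieModule.eq_zero_of_lie_eq_smul {R L M : Type*} [Field R] [LieRing L] [LieAlgebra R L]
    [AddCommGroup M] [Module R M] [LieRingModule L M] [LieModule R L M] [IsNilpotent L M]
    {x : L} {v : M} {c : R} (hv : v ≠ 0) (h : ⁅x, v⁆ = c • v) : c = 0 :=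
  (Module.End.hasEigenvalue_of_hasEigenvector ⟨Module.End.mem_eigenspace_iff.mpr h, hv⟩
    |>.isNilpotent_of_isNilpotent (isNilpotent_toEnd_of_isNilpotent R L M x)).eq_zero

theorem LieAlgebra.exists_lie_eq_smul_of_finrank_derivedSeries_eq_one {F L : Type*} [Field F]
    [LieRing L] [LieAlgebra F L] (hd : finrank F (derivedSeries F L 1) = 1) :
    ∃ (z : L) (B : L →ₗ[F] L →ₗ[F] F), z ≠ 0 ∧ B ≠ 0 ∧ ∀ x y, ⁅x, y⁆ = B x y • z := by
  obtain ⟨⟨z, hzL⟩, hz, hspan⟩ := finrank_eq_one_iff'.mp hd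
  replace hz : z ≠ 0 := fun h => hz (Subtype.ext h)
  obtain ⟨φ, hφ⟩ := LinearMap.exists_leftInverse_of_injective (LinearMap.toSpanSingleton F L z)
    (LinearMap.ker_toSpanSingleton F hz)
  have hmem : ∀ w, w ∈ derivedSeries F L 1 ↔ w ∈ Submodule.span F {⁅x, y⁆ | (x : L) (y : L)} :=
    fun w => by rw [← coe_derivedSeries_one_eq]; rfl
  let B := (LieModule.toEnd F L L : L →ₗ[F] Module.End F L).compr₂ φ
  have hB : ∀ x y, ⁅x, y⁆ = B x y • z := fun x y => by
    obtain ⟨c, hc⟩ := hspan ⟨_, (hmem _).mpr (Submodule.subset_span ⟨x, y, rfl⟩)⟩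
    replace hc : c • z = ⁅x, y⁆ := congrArg Subtype.val hc
    have hφc : φ (c • z) = c := by simpa using LinearMap.congr_fun hφ c
    simp [B, ← hc, hφc]
  refine ⟨z, B, hz, fun hB0 => hz ?_, hB⟩
  refine (Submodule.mem_bot F).mp (Submodule.span_le.mpr ?_ ((hmem z).mp hzL))
  rintro _ ⟨x, y, rfl⟩
  simp [hB, hB0]

/-- a nilpotent Lie algebra with one-dimensional derived subalgebra is
`H(m) ⊕ A(n-2m-1)`. -/
theorem nilpotent_dim_derived_one (F : Type u) [Field F]
    (L : Type u) [LieRing L] [LieAlgebra F L] [FiniteDimensional F L]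
    [LieRing.IsNilpotent L] (n : ℕ) (hn : Module.finrank F L = n)
    (hd : Module.finrank F ↥(derivedSeries F L 1) = 1) :
    ∃ m : ℕ, 1 ≤ m ∧ Nonempty (L ≃ₗ⁅F⁆ (Heis F m × AbLie F (n - 2 * m - 1))) := by
  obtain ⟨z, B, hz, hB0, hB⟩ := exists_lie_eq_smul_of_finrank_derivedSeries_eq_one hd
  have hBz : ∀ x, B x z = 0 := fun x => LieModule.eq_zero_of_lie_eq_smul hz (hB x z)
  have halt : B.IsAlt := fun x => smul_left_injective F hz (by simp [← hB])
  have hzB : B z = 0 := LinearMap.ext fun x => by rw [← halt.neg, hBz, neg_zero]; rfl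
  obtain ⟨m, k, E, hE, hEz⟩ := halt.exists_heis_prod_linearEquiv hz hzB
  have hm : 1 ≤ m := by
    refine Nat.one_le_iff_ne_zero.mpr fun hm0 => hB0 ?_
    subst hm0
    ext x y
    obtain ⟨p, rfl⟩ := E.surjective x
    obtain ⟨q, rfl⟩ := E.surjective y
    simp [hE]
  have hk : n - 2 * m - 1 = k := by
    have := E.finrank_eq
    rw [finrank_prod, finrank_heis, finrank_abLie] at this
    omega
  obtain ⟨EL⟩ := nonempty_lieEquiv_heis_prod hB E hE hEz
  exact ⟨m, hm, hk ▸ ⟨EL.symm⟩⟩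
end
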